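/- For every musical interval σ ∈ 𝔖 with σ ≠ 𝔬, one has 𝒩(K(σ)) ≤ m_σ < n_σ; in particular there exists ℓ ∈ ℕ₀ such that 2^ℓ · n_{K(σ)} = m_σ. -/

import Mathlib

/-- The positive rational numbers ℚ₊. -/
abbrev Qpos := {q : ℚ // 0 < q}

/-- Octave equivalence on ℚ₊: `q₁ ∼ q₂` iff `q₁ = 2^n * q₂` for some `n ∈ ℤ`. -/
def octaveRel (q₁ q₂ : Qpos) : Prop := ∃ n : ℤ, (q₁ : ℚ) = 2 ^ n * (q₂ : ℚ)

/-- The group of musical intervals `𝔖 = ℚ₊/∼`. -/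
def MusInt := Quot octaveRel

/-- The musical interval `[q]` represented by a positive rational `q`. -/
def cls (q : ℚ) (h : 0 < q) : MusInt := Quot.mk octaveRel ⟨q, h⟩

/-- The octave `𝔬 = [1/2]`. -/
def octave : MusInt := cls (1/2) (by norm_num)

/-- `repSpec σ (m, n)` says that `(m, n)` is a reduced representative of `σ`,
i.e. `σ = [m/n]`, `1/2 ≤ m/n < 1` and `gcd(n, m) = 1`. -/
def repSpec (σ : MusInt) (p : ℕ × ℕ) : Prop :=
  ∃ h : (0 : ℚ) < (p.1 : ℚ) / (p.2 : ℚ),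
    σ = cls ((p.1 : ℚ) / (p.2 : ℚ)) h ∧
    (1 : ℚ) / 2 ≤ (p.1 : ℚ) / (p.2 : ℚ) ∧ (p.1 : ℚ) / (p.2 : ℚ) < 1 ∧
    Nat.gcd p.2 p.1 = 1

open Classical in
/-- The canonical reduced representative `(m_σ, n_σ)` of a musical interval. -/
noncomputable def rep (σ : MusInt) : ℕ × ℕ :=
  if h : ∃ p, repSpec σ p then h.choose else (1, 2)

/-- The numerator `m_σ`, so that `σ = [m_σ/n_σ]`. -/
noncomputable def mVal (σ : MusInt) : ℕ := (rep σ).1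

/-- The map `𝒩`, sending `σ` to the denominator `n_σ`, so that `σ = [m_σ/n_σ]`. -/
noncomputable def nVal (σ : MusInt) : ℕ := (rep σ).2

/-- The Kepler map `K(σ) = [(n_σ - m_σ)/m_σ]`. -/
noncomputable def kepler (σ : MusInt) : MusInt :=
  if h : (0 : ℚ) < ((nVal σ : ℚ) - (mVal σ : ℚ)) / (mVal σ : ℚ) then
    cls (((nVal σ : ℚ) - (mVal σ : ℚ)) / (mVal σ : ℚ)) h
  else octave

/-- The height `𝔥(σ) = min {ℓ ∈ ℕ₀ : K^ℓ(σ) = 𝔬}`. -/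
noncomputable def height (σ : MusInt) : ℕ := sInf {ℓ : ℕ | kepler^[ℓ] σ = octave}

/-- `n` is an Euclidean Gauss–Wantzel number: `n = 2^k * 3^l * 5^m` with
`l, m ∈ {0, 1}` and `n > 1`. -/
def IsEuclidean (n : ℕ) : Prop :=
  1 < n ∧ ∃ k l m : ℕ, (l = 0 ∨ l = 1) ∧ (m = 0 ∨ m = 1) ∧ n = 2 ^ k * 3 ^ l * 5 ^ m

/-- `p` is a Fermat prime: a prime of the form `2^(2^n) + 1`. -/
def IsFermatPrime (p : ℕ) : Prop := p.Prime ∧ ∃ n : ℕ, p = 2 ^ (2 ^ n) + 1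

/-- `n` is a Gauss–Wantzel number: `n > 1` is a power of `2` times a product of
distinct Fermat primes. -/
def IsGaussWantzel (n : ℕ) : Prop :=
  1 < n ∧ ∃ (k : ℕ) (s : Finset ℕ), (∀ p ∈ s, IsFermatPrime p) ∧ n = 2 ^ k * ∏ p ∈ s, p

/-- `σ` is Euclidean consonant: all members of its second Kepler sequence are
Euclidean Gauss–Wantzel numbers. -/
def EuclideanConsonant (σ : MusInt) : Prop :=
  ∀ j ≤ height σ, IsEuclidean (nVal (kepler^[j] σ))

/-- `σ` is Gaussian consonant: all members of its second Kepler sequence are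
Gauss–Wantzel numbers. -/
def GaussianConsonant (σ : MusInt) : Prop :=
  ∀ j ≤ height σ, IsGaussWantzel (nVal (kepler^[j] σ))

/-!
Write `σ = [m/n]` with `1/2 < m/n < 1`; equality at `1/2` would make `σ` the octave. Then
`K(σ) = [d/m]` with `d = n - m`, where `0 < d < m` and `gcd(d, m) = gcd(n, m) = 1`. The reduced
representative of `[d/m]` is `2^j · d/m` for the `j ∈ ℕ` putting it into `[1/2, 1)`, and multiplying
a fraction by `2^j` can only cancel powers of `2` from its denominator `m`.
-/

theorem Rat.den_natCast_mul_mul_gcd (n : ℕ) (r : ℚ) : (n * r).den * n.gcd r.den = r.den := by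
  have h := Rat.den_mul_den_eq_den_mul_gcd n r
  rw [Rat.num_natCast, Rat.den_natCast, one_mul, Int.natAbs_mul, Int.natAbs_natCast,
    Nat.Coprime.gcd_mul_right_cancel _ r.reduced] at h
  exact h.symm

theorem Rat.exists_pow_mul_den_pow_mul {p : ℕ} (hp : p.Prime) (j : ℕ) (r : ℚ) :
    ∃ ℓ : ℕ, p ^ ℓ * (p ^ j * r).den = r.den := by
  obtain ⟨ℓ, -, hℓ⟩ := (Nat.dvd_prime_pow hp).1 (Nat.gcd_dvd_left (p ^ j) r.den)
  refine ⟨ℓ, ?_⟩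
  rw [← hℓ, mul_comm]
  exact_mod_cast Rat.den_natCast_mul_mul_gcd (p ^ j) r

theorem exists_two_zpow_mul_mem_Ico {q : ℚ} (hq : 0 < q) :
    ∃ k : ℤ, 2 ^ k * q ∈ Set.Ico (1 / 2 : ℚ) 1 := by
  obtain ⟨k, hk, hk'⟩ := exists_mem_Ico_zpow hq (by norm_num : (1 : ℚ) < 2)
  refine ⟨-(k + 1), ?_, ?_⟩
  · calc (1 / 2 : ℚ) = 2 ^ (-(k + 1)) * 2 ^ k := by
          rw [← zpow_add₀ two_ne_zero]; norm_num
      _ ≤ 2 ^ (-(k + 1)) * q := by gcongr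
  · calc 2 ^ (-(k + 1)) * q < 2 ^ (-(k + 1)) * 2 ^ (k + 1) := by gcongr
      _ = 1 := by rw [← zpow_add₀ two_ne_zero]; norm_num

theorem exists_two_pow_mul_mem_Ico {q : ℚ} (hq : 0 < q) (hq1 : q < 1) :
    ∃ j : ℕ, 2 ^ j * q ∈ Set.Ico (1 / 2 : ℚ) 1 := by
  obtain ⟨k, hk, hk'⟩ := exists_two_zpow_mul_mem_Ico hq
  have hk0 : 0 ≤ k := by
    by_contra! hk0
    have h2k : (2 : ℚ) ^ k ≤ 2 ^ (-1 : ℤ) := zpow_le_zpow_right₀ one_le_two (by omega)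
    rw [zpow_neg_one] at h2k
    nlinarith
  lift k to ℕ using hk0
  exact ⟨k, by simpa using hk, by simpa using hk'⟩

theorem octaveRel_equivalence : Equivalence octaveRel where
  refl _ := ⟨0, by simp⟩
  symm := by
    rintro a b ⟨n, h⟩
    exact ⟨-n, by rw [h, ← mul_assoc, ← zpow_add₀ two_ne_zero]; simp⟩
  trans := by
    rintro a b c ⟨n, h⟩ ⟨m, h'⟩
    exact ⟨n + m, by rw [h, h', ← mul_assoc, ← zpow_add₀ two_ne_zero]⟩

theorem cls_eq_cls_iff {a b : ℚ} (ha : 0 < a) (hb : 0 < b) :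
    cls a ha = cls b hb ↔ ∃ n : ℤ, a = 2 ^ n * b :=
  ⟨fun h => octaveRel_equivalence.eqvGen_iff.1 (Quot.eqvGen_exact h), fun h => Quot.sound h⟩

theorem cls_congr {a b : ℚ} (hab : a = b) (ha : 0 < a) (hb : 0 < b) : cls a ha = cls b hb := by
  subst hab; rfl

theorem cls_two_zpow_mul (k : ℤ) {q : ℚ} (hq : 0 < q) (hkq : 0 < 2 ^ k * q) :
    cls (2 ^ k * q) hkq = cls q hq :=
  (cls_eq_cls_iff hkq hq).2 ⟨k, rfl⟩

theorem eq_of_cls_eq_cls {p q : ℚ} (hp : 0 < p) (hq : 0 < q) (h : cls p hp = cls q hq)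
    (hpI : p ∈ Set.Ico (1 / 2 : ℚ) 1) (hqI : q ∈ Set.Ico (1 / 2 : ℚ) 1) : p = q := by
  obtain ⟨n, rfl⟩ := (cls_eq_cls_iff hp hq).1 h
  have hlt : (2 : ℚ) ^ (-1 : ℤ) < 2 ^ n := by
    have : (1 / 2 : ℚ) < 2 ^ n * 1 := hpI.1.trans_lt (by gcongr; exact hqI.2)
    norm_num at this ⊢; exact this
  have hlt' : (2 : ℚ) ^ n < 2 ^ (1 : ℤ) := by
    have : (2 : ℚ) ^ n * (1 / 2) < 1 := lt_of_le_of_lt (by gcongr; exact hqI.1) hpI.2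
    norm_num at this ⊢; linarith
  rw [zpow_lt_zpow_iff_right₀ one_lt_two] at hlt hlt'
  obtain rfl : n = 0 := by omega
  simp

theorem repSpec.pos {σ : MusInt} {p : ℕ × ℕ} (h : repSpec σ p) : 0 < p.1 ∧ 0 < p.2 := by
  rcases div_pos_iff.1 h.1 with ⟨h1, h2⟩ | ⟨h1, -⟩
  · exact ⟨by exact_mod_cast h1, by exact_mod_cast h2⟩
  · exact absurd h1 (Nat.cast_nonneg _).not_gt

theorem repSpec.num_eq {σ : MusInt} {p : ℕ × ℕ} (h : repSpec σ p) :
    ((p.1 : ℚ) / p.2).num = p.1 := by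
  have hcop : Nat.Coprime p.1 p.2 := Nat.coprime_comm.1 h.2.2.2.2
  simpa only [Int.cast_natCast] using
    Rat.num_div_eq_of_coprime (a := p.1) (b := p.2) (by exact_mod_cast h.pos.2) hcop

theorem repSpec.den_eq {σ : MusInt} {p : ℕ × ℕ} (h : repSpec σ p) :
    ((p.1 : ℚ) / p.2).den = p.2 := by
  have hcop : Nat.Coprime p.1 p.2 := Nat.coprime_comm.1 h.2.2.2.2
  simpa only [Int.cast_natCast, Nat.cast_inj] using
    Rat.den_div_eq_of_coprime (a := p.1) (b := p.2) (by exact_mod_cast h.pos.2) hcop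

theorem repSpec_unique {σ : MusInt} {p p' : ℕ × ℕ} (hp : repSpec σ p) (hp' : repSpec σ p') :
    p = p' := by
  have ⟨h0, hσ, h1, h2, _⟩ := hp
  have ⟨h0', hσ', h1', h2', _⟩ := hp'
  have hq : (p.1 : ℚ) / p.2 = p'.1 / p'.2 := eq_of_cls_eq_cls h0 h0' (hσ ▸ hσ') ⟨h1, h2⟩ ⟨h1', h2'⟩
  refine Prod.ext ?_ ?_
  · exact_mod_cast hp.num_eq.symm.trans (hq ▸ hp'.num_eq)
  · exact hp.den_eq.symm.trans (hq ▸ hp'.den_eq)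

theorem repSpec_cls {q : ℚ} (hq : 0 < q) (hqI : q ∈ Set.Ico (1 / 2 : ℚ) 1) :
    repSpec (cls q hq) (q.num.toNat, q.den) := by
  have hnum : q.num.toNat = q.num.natAbs := by have := Rat.num_pos.2 hq; omega
  have hq' : ((q.num.toNat : ℕ) : ℚ) / q.den = q := by
    rw [hnum, Nat.cast_natAbs, abs_of_pos (Rat.num_pos.2 hq)]
    exact Rat.num_div_den q
  rw [repSpec]
  dsimp only
  rw [hq', Nat.gcd_comm, hnum]
  exact ⟨hq, rfl, hqI.1, hqI.2, q.reduced⟩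

theorem exists_repSpec (σ : MusInt) : ∃ p, repSpec σ p := by
  induction σ using Quot.ind with
  | _ q =>
    obtain ⟨q, hq⟩ := q
    obtain ⟨k, hk⟩ := exists_two_zpow_mul_mem_Ico hq
    have hkq : 0 < 2 ^ k * q := by positivity
    exact ⟨_, cls_two_zpow_mul k hq hkq ▸ repSpec_cls hkq hk⟩

theorem rep_eq_of_repSpec {σ : MusInt} {p : ℕ × ℕ} (h : repSpec σ p) : rep σ = p := by
  have hex : ∃ p, repSpec σ p := ⟨p, h⟩
  rw [rep, dif_pos hex]
  exact repSpec_unique hex.choose_spec h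

theorem repSpec_rep (σ : MusInt) : repSpec σ (rep σ) := by
  obtain ⟨p, hp⟩ := exists_repSpec σ
  rwa [rep_eq_of_repSpec hp]

theorem nVal_cls {q : ℚ} (hq : 0 < q) (hqI : q ∈ Set.Ico (1 / 2 : ℚ) 1) :
    nVal (cls q hq) = q.den := by
  rw [nVal, rep_eq_of_repSpec (repSpec_cls hq hqI)]

theorem exists_two_pow_mul_nVal_cls_eq_den {r : ℚ} (hr : 0 < r) (hr1 : r < 1) :
    ∃ ℓ : ℕ, 2 ^ ℓ * nVal (cls r hr) = r.den := by
  obtain ⟨j, hj⟩ := exists_two_pow_mul_mem_Ico hr hr1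
  have hjr : 0 < 2 ^ j * r := by positivity
  have hcls : cls (2 ^ j * r) hjr = cls r hr := (cls_eq_cls_iff hjr hr).2 ⟨j, by simp⟩
  rw [← hcls, nVal_cls hjr hj]
  exact_mod_cast Rat.exists_pow_mul_den_pow_mul Nat.prime_two j r

theorem mVal_lt_nVal (σ : MusInt) : mVal σ < nVal σ := by
  have h : repSpec σ (mVal σ, nVal σ) := repSpec_rep σ
  have hlt : (mVal σ : ℚ) / nVal σ < 1 := h.2.2.2.1
  rw [div_lt_one (by exact_mod_cast h.pos.2)] at hlt
  exact_mod_cast hlt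

theorem exists_two_pow_mul_nVal_kepler_eq_mVal {σ : MusInt} (hσ : σ ≠ octave) :
    ∃ ℓ : ℕ, 2 ^ ℓ * nVal (kepler σ) = mVal σ := by
  have h : repSpec σ (mVal σ, nVal σ) := repSpec_rep σ
  have ⟨hq, hσq, hq_ge, hq_lt, _⟩ := h
  set q : ℚ := mVal σ / nVal σ with hq_def
  have hq_gt : 1 / 2 < q := hq_ge.lt_of_ne fun hq2 => hσ (hσq.trans (cls_congr hq2.symm _ _))
  have hm : (mVal σ : ℚ) ≠ 0 := by exact_mod_cast h.pos.1.ne'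
  set r := q⁻¹ - 1 with hr_def
  have hr : 0 < r := by rw [hr_def, sub_pos]; exact (one_lt_inv₀ hq).2 hq_lt
  have hr1 : r < 1 := by
    rw [hr_def, sub_lt_iff_lt_add, one_add_one_eq_two]
    exact inv_lt_of_inv_lt₀ (by norm_num) (by simpa using hq_gt)
  have hr_eq : ((nVal σ : ℚ) - mVal σ) / mVal σ = r := by
    rw [hr_def, hq_def, inv_div, sub_div, div_self hm]
  have hK : kepler σ = cls r hr := by
    rw [kepler, dif_pos (hr_eq ▸ hr)]
    exact cls_congr hr_eq _ _
  have hden : r.den = mVal σ := by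
    have hnum : q.num = mVal σ := h.num_eq
    have hsub : (q⁻¹ - 1).den = q⁻¹.den := by exact_mod_cast Rat.sub_intCast_den q⁻¹ 1
    rw [hr_def, hsub, Rat.den_inv_of_ne_zero hq.ne', hnum, Int.natAbs_natCast]
  rw [hK, ← hden]
  exact exists_two_pow_mul_nVal_cls_eq_den hr hr1

/-- for `σ ≠ 𝔬` one has `𝒩(K(σ)) ≤ m_σ < n_σ`, and in particular
`2^ℓ * n_{K(σ)} = m_σ` for some `ℓ ∈ ℕ₀`. -/
theorem nVal_kepler_le_mVal (σ : MusInt) (hσ : σ ≠ octave) :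
    nVal (kepler σ) ≤ mVal σ ∧ mVal σ < nVal σ ∧
      ∃ ℓ : ℕ, 2 ^ ℓ * nVal (kepler σ) = mVal σ := by
  obtain ⟨ℓ, hℓ⟩ := exists_two_pow_mul_nVal_kepler_eq_mVal hσ
  exact ⟨hℓ ▸ Nat.le_mul_of_pos_left _ (Nat.two_pow_pos ℓ), mVal_lt_nVal σ, ℓ, hℓ⟩
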